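/- arXiv:1409.6172 — 3 statements merged into one kernel-verified Lean document; each statement's English description precedes it below -/
import Mathlib

section
/- The outcome of the Perfect Prediction Equilibrium is Pareto-optimal among all outcomes of the game: there is no outcome giving a strictly higher payoff to both players than the PPE outcome. -/
open Classical

/-- A finite two-player extensive-form game tree with perfect information:
leaves carry a pair of payoffs (Peter's, Mary's); internal nodes carry the
player to move (`true` = Peter, `false` = Mary) and a list of children. -/
inductive GameTree where
  | leaf (pP pM : ℤ) : GameTree
  | node (player : Bool) (children : List GameTree) : GameTree

namespace GameTree

/-- The list of outcomes (leaf payoff pairs) of a game tree. -/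
def outcomes : GameTree → List (ℤ × ℤ)
  | .leaf p m => [(p, m)]
  | .node _ ts => ts.attach.flatMap (fun t => outcomes t.1)
decreasing_by
  have := List.sizeOf_lt_of_mem t.2
  simp only [GameTree.node.sizeOf_spec]
  omega

/-- The payoff of a given player at an outcome. -/
def payOf (pl : Bool) (o : ℤ × ℤ) : ℤ := if pl then o.1 else o.2

/-- Every internal node has a nonempty list of children. -/
def WellFormed : GameTree → Prop
  | .leaf _ _ => True
  | .node _ ts => ts ≠ [] ∧ ∀ t ∈ ts.attach, WellFormed t.1
decreasing_by
  have := List.sizeOf_lt_of_mem t.2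
  simp only [GameTree.node.sizeOf_spec]
  omega

/-- Strict preferences: each player's payoffs at the outcomes are pairwise
distinct. -/
def StrictPref (g : GameTree) : Prop :=
  (g.outcomes.map Prod.fst).Nodup ∧ (g.outcomes.map Prod.snd).Nodup

/-- Target set of a Newcombian State (a list of children subtrees) with respect
to the current player's payoff `pay` and the remaining-outcome set `I`. -/
noncomputable def target (pay : ℤ × ℤ → ℤ) (I : Finset (ℤ × ℤ)) :
    List GameTree → Finset (ℤ × ℤ)
  | [] => ∅
  | [t] => I ∩ t.outcomes.toFinset
  | t :: u :: p =>
      let Tp := target pay I (u :: p)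
      (I ∩ t.outcomes.toFinset).filter
        (fun o => ¬ (Tp.Nonempty ∧ ∀ o' ∈ Tp, pay o < pay o'))

/-- `o` is discarded by some Newcombian State at a node with children `ts`,
remaining set `I` and current-player payoff `pay`. -/
def Discards (pay : ℤ × ℤ → ℤ) (ts : List GameTree) (I : Finset (ℤ × ℤ))
    (o : ℤ × ℤ) : Prop :=
  ∃ η : List GameTree, η ≠ [] ∧ (∀ t ∈ η, t ∈ ts) ∧ η.Chain' (· ≠ ·) ∧
    o ∈ I ∧ (∀ t ∈ η.head?, o ∉ t.outcomes.toFinset) ∧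
    (target pay I η).Nonempty ∧
    ∀ o' ∈ target pay I η, pay o < pay o'

/-- The set of outcomes surviving all Newcombian-State discardings at a node. -/
noncomputable def survivors (pay : ℤ × ℤ → ℤ) (ts : List GameTree)
    (I : Finset (ℤ × ℤ)) : Finset (ℤ × ℤ) :=
  I.filter (fun o => ¬ Discards pay ts I o)

/-- The Perfect Prediction Equilibrium construction: starting from the root
with remaining set `I`, at each node discard all outcomes discarded by some
Newcombian State, then move to the unique child whose outcomes contain all
remaining outcomes; the reached leaf is the PPE outcome. -/
inductive PPEReach : GameTree → Finset (ℤ × ℤ) → (ℤ × ℤ) → Prop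
  | leaf (p m : ℤ) (I : Finset (ℤ × ℤ)) (h : (p, m) ∈ I) :
      PPEReach (.leaf p m) I (p, m)
  | node (pl : Bool) (ts : List GameTree) (I : Finset (ℤ × ℤ))
      (t : GameTree) (o : ℤ × ℤ) (ht : t ∈ ts)
      (hsub : survivors (payOf pl) ts I ⊆ t.outcomes.toFinset)
      (hrec : PPEReach t (survivors (payOf pl) ts I) o) :
      PPEReach (.node pl ts) I o

/-- Backward induction (Subgame Perfect Equilibrium) outcome: at each node the
current player moves to the child whose backward-induction outcome maximizes
her payoff. -/
noncomputable def biOutcome : GameTree → ℤ × ℤ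
  | .leaf p m => (p, m)
  | .node pl ts =>
      ((ts.attach.map (fun t => biOutcome t.1)).argmax (payOf pl)).getD (0, 0)
decreasing_by
  have := List.sizeOf_lt_of_mem t.2
  simp only [GameTree.node.sizeOf_spec]
  omega

end GameTree

/-!
At every step of the construction, an outcome discarded by a Newcombian State lies strictly below
that state's target set for the current player, whereas every surviving outcome is weakly above
some element of it: a survivor strictly below the whole target set would itself be discarded,
either by the same state or, if it lies in the state's first subtree, by the state's tail. Hence
each discarded outcome is strictly worse for the player moving at that step than the PPE outcome,
which survives every step, and no outcome is better for both players.
-/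

namespace GameTree

theorem discards_of_forall_target_lt {pay : ℤ × ℤ → ℤ} {ts : List GameTree}
    {I : Finset (ℤ × ℤ)} {o : ℤ × ℤ} (hoI : o ∈ I) (η : List GameTree) (hne : η ≠ [])
    (hsub : ∀ t ∈ η, t ∈ ts) (hch : η.IsChain (· ≠ ·)) (hT : (target pay I η).Nonempty)
    (hlt : ∀ o' ∈ target pay I η, pay o < pay o') : Discards pay ts I o := by
  induction η with
  | nil => exact absurd rfl hne
  | cons t rest ih =>
    by_cases hot : o ∈ t.outcomes.toFinset
    swap
    · exact ⟨t :: rest, hne, hsub, hch, hoI, by simpa using hot, hT, hlt⟩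
    have hoT : o ∉ target pay I (t :: rest) := fun h => lt_irrefl _ (hlt o h)
    cases rest with
    | nil => exact absurd (Finset.mem_inter.2 ⟨hoI, hot⟩) hoT
    | cons u p =>
      simp only [target, Finset.mem_filter, Finset.mem_inter, hoI, hot, true_and,
        not_not] at hoT
      exact ih (List.cons_ne_nil _ _) (fun x hx => hsub x (List.mem_cons_of_mem _ hx))
        hch.tail hoT.1 hoT.2

theorem Discards.lt_of_mem_survivors {pay : ℤ × ℤ → ℤ} {ts : List GameTree}
    {I : Finset (ℤ × ℤ)} {o o' : ℤ × ℤ} (hd : Discards pay ts I o')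
    (ho : o ∈ survivors pay ts I) : pay o' < pay o := by
  obtain ⟨η, hne, hsub, hch, -, -, hT, hlt⟩ := hd
  obtain ⟨hoI, hnd⟩ := Finset.mem_filter.1 ho
  obtain ⟨o'', ho'', hle⟩ : ∃ o'' ∈ target pay I η, pay o'' ≤ pay o := by
    by_contra! h
    exact hnd (discards_of_forall_target_lt hoI η hne hsub hch hT h)
  exact (hlt o'' ho'').trans_le hle

theorem not_lt_and_lt_of_payOf_lt {pl : Bool} {o o' : ℤ × ℤ}
    (h : payOf pl o' < payOf pl o) : ¬ (o.1 < o'.1 ∧ o.2 < o'.2) := by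
  rintro ⟨h₁, h₂⟩
  cases pl <;> simp only [payOf, Bool.false_eq_true, if_true, if_false] at h <;> omega

theorem PPEReach.mem {t : GameTree} {I : Finset (ℤ × ℤ)} {o : ℤ × ℤ}
    (h : PPEReach t I o) : o ∈ I := by
  induction h with
  | leaf _ _ _ h => exact h
  | node _ _ _ _ _ _ _ _ ih => exact Finset.filter_subset _ _ ih

theorem PPEReach.not_lt_and_lt {t : GameTree} {I : Finset (ℤ × ℤ)} {o : ℤ × ℤ}
    (h : PPEReach t I o) (hI : I ⊆ t.outcomes.toFinset) :
    ∀ o' ∈ I, ¬ (o.1 < o'.1 ∧ o.2 < o'.2) := by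
  induction h with
  | leaf p m I _ =>
    intro o' ho' hdom
    obtain rfl : o' = (p, m) := by simpa [outcomes] using hI ho'
    exact lt_irrefl _ hdom.1
  | node pl ts I t o _ hsub hrec ih =>
    intro o' ho'
    by_cases hs : o' ∈ survivors (payOf pl) ts I
    · exact ih hsub o' hs
    · have hd : Discards (payOf pl) ts I o' := by simpa [survivors, ho'] using hs
      exact not_lt_and_lt_of_payOf_lt (Discards.lt_of_mem_survivors hd hrec.mem)

end GameTree

theorem ppe_pareto_optimal_general (g : GameTree) (o : ℤ × ℤ)
    (hppe : GameTree.PPEReach g g.outcomes.toFinset o) :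
    ∀ o' ∈ g.outcomes, ¬ (o.1 < o'.1 ∧ o.2 < o'.2) :=
  fun o' ho' => hppe.not_lt_and_lt subset_rfl o' (List.mem_toFinset.2 ho')

/-- the PPE outcome is Pareto-optimal among all outcomes of the
game: no outcome gives a strictly higher payoff to both players. -/
theorem ppe_pareto_optimal (g : GameTree) (hwf : g.WellFormed)
    (hsp : g.StrictPref) (o : ℤ × ℤ)
    (hppe : GameTree.PPEReach g g.outcomes.toFinset o) :
    ∀ o' ∈ g.outcomes, ¬ (o.1 < o'.1 ∧ o.2 < o'.2) :=
  ppe_pareto_optimal_general g o hppe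
end

section
/- At any step of the PPE construction, a non-degenerate Newcombian Class is characterized by its worst payoff: if two Newcombian States η, η' have nonempty target sets whose minimum payoffs (with respect to the current player) are equal, then their target sets are equal. -/
open Classical

section PPE

variable {O C : Type*} [Fintype O] [DecidableEq O] [DecidableEq C]

/-- Target set of a Newcombian State (a list of children of the current node),
defined recursively from the remaining-outcome set `I`, the descendant map `D`
and the current player's payoff `pay`. -/
noncomputable def target (I : Finset O) (D : C → Finset O) (pay : O → ℤ) :
    List C → Finset O
  | [] => ∅
  | [n] => I ∩ D n
  | n :: m :: p =>
      let Tp := target I D pay (m :: p)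
      (I ∩ D n).filter (fun o => ¬ (Tp.Nonempty ∧ ∀ o' ∈ Tp, pay o < pay o'))

/-- A Newcombian State at the current node: a nonempty list of children with no
two consecutive elements equal. -/
def ValidState (F : Finset C) (η : List C) : Prop :=
  η ≠ [] ∧ (∀ n ∈ η, n ∈ F) ∧ η.Chain' (· ≠ ·)

/-- `o` is discarded by some Newcombian State at the current node. -/
def Discards (I : Finset O) (D : C → Finset O) (pay : O → ℤ) (F : Finset C)
    (o : O) : Prop :=
  ∃ n p, ValidState F (n :: p) ∧ o ∈ I ∧ o ∉ D n ∧
    (target I D pay (n :: p)).Nonempty ∧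
    ∀ o' ∈ target I D pay (n :: p), pay o < pay o'

/-- The set of outcomes remaining after the discarding process at the current node. -/
noncomputable def survivors (I : Finset O) (D : C → Finset O) (pay : O → ℤ)
    (F : Finset C) : Finset O :=
  I.filter (fun o => ¬ Discards I D pay F o)

/-- Worst payoff of a Newcombian State. -/
noncomputable def wp (I : Finset O) (D : C → Finset O) (pay : O → ℤ)
    (η : List C) : ℤ :=
  sInf (pay '' (target I D pay η : Set O))

end PPE

/-! A target set with pure part `n` is an upper set of `I ∩ D n` for the payoff order: an
outcome is removed only for being strictly worse than every outcome of a nonempty set, so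
whatever is at least as good as a kept outcome is kept as well. Hence the target set is the
part of `I ∩ D n` above its minimum. Equal minima are attained, by injectivity of `pay`, at
one and the same outcome, which lies in both `D n` and `D n'`; disjointness then forces
`n = n'`. -/

section PPE

variable {O C : Type*} [Fintype O] [DecidableEq O]
  {I : Finset O} {D : C → Finset O} {pay : O → ℤ}

theorem target_cons_subset (n : C) (p : List C) :
    target I D pay (n :: p) ⊆ I ∩ D n := by
  cases p with
  | nil => exact subset_rfl
  | cons m q => exact Finset.filter_subset _ _

theorem mem_target_cons_of_le {n : C} {p : List C} {o o' : O}
    (ho : o ∈ target I D pay (n :: p)) (ho' : o' ∈ I ∩ D n) (hle : pay o ≤ pay o') :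
    o' ∈ target I D pay (n :: p) := by
  cases p with
  | nil => exact ho'
  | cons m q =>
    simp only [target, Finset.mem_filter] at ho ⊢
    exact ⟨ho', fun ⟨hne, hlt⟩ => ho.2 ⟨hne, fun o'' ho'' => hle.trans_lt (hlt o'' ho'')⟩⟩

theorem target_cons_eq_filter_min'_le (n : C) (p : List C)
    (h : (target I D pay (n :: p)).Nonempty) :
    target I D pay (n :: p) =
      (I ∩ D n).filter
        (fun o => ((target I D pay (n :: p)).image pay).min' (h.image pay) ≤ pay o) := by
  obtain ⟨o₀, ho₀, hpo₀⟩ := Finset.mem_image.1 (Finset.min'_mem _ (h.image pay))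
  ext o
  rw [Finset.mem_filter]
  exact ⟨fun ho => ⟨target_cons_subset n p ho, Finset.min'_le _ _ (Finset.mem_image_of_mem pay ho)⟩,
    fun ⟨ho, hle⟩ => mem_target_cons_of_le ho₀ ho (hpo₀ ▸ hle)⟩

theorem exists_eq_cons_of_target_nonempty {η : List C} (h : (target I D pay η).Nonempty) :
    ∃ n p, η = n :: p := by
  cases η with
  | nil => simp [target] at h
  | cons n p => exact ⟨n, p, rfl⟩

theorem head_eq_of_target_min'_eq (hdisj : ∀ c c' : C, c ≠ c' → Disjoint (D c) (D c'))
    (hpay : Function.Injective pay) {n n' : C} {p p' : List C}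
    (h : (target I D pay (n :: p)).Nonempty) (h' : (target I D pay (n' :: p')).Nonempty)
    (hmin : ((target I D pay (n :: p)).image pay).min' (h.image pay)
          = ((target I D pay (n' :: p')).image pay).min' (h'.image pay)) :
    n = n' := by
  obtain ⟨o, ho, hpo⟩ := Finset.mem_image.1 (Finset.min'_mem _ (h.image pay))
  obtain ⟨o', ho', hpo'⟩ := Finset.mem_image.1 (Finset.min'_mem _ (h'.image pay))
  have hoo' : o = o' := hpay (by rw [hpo, hpo', hmin])
  have hon : o ∈ D n := (Finset.mem_inter.1 (target_cons_subset n p ho)).2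
  have hon' : o ∈ D n' := hoo' ▸ (Finset.mem_inter.1 (target_cons_subset n' p' ho')).2
  by_contra hne
  exact Finset.disjoint_left.1 (hdisj n n' hne) hon hon'

end PPE

theorem nondegenerate_class_characterized_by_worst_payoff_general
    {O C : Type*} [Fintype O] [DecidableEq O]
    (I : Finset O) (D : C → Finset O) (pay : O → ℤ)
    (hdisj : ∀ c c' : C, c ≠ c' → Disjoint (D c) (D c'))
    (hpay : Function.Injective pay)
    (η η' : List C)
    (h : (target I D pay η).Nonempty) (h' : (target I D pay η').Nonempty)
    (hmin : ((target I D pay η).image pay).min' (h.image pay)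
          = ((target I D pay η').image pay).min' (h'.image pay)) :
    target I D pay η = target I D pay η' := by
  obtain ⟨n, p, rfl⟩ := exists_eq_cons_of_target_nonempty h
  obtain ⟨n', p', rfl⟩ := exists_eq_cons_of_target_nonempty h'
  obtain rfl := head_eq_of_target_min'_eq hdisj hpay h h' hmin
  rw [target_cons_eq_filter_min'_le n p h, target_cons_eq_filter_min'_le n p' h', hmin]

/-- a non-degenerate Newcombian Class is characterized by its worst
payoff: two Newcombian States with nonempty target sets having the same minimum
payoff for the current player have equal target sets. -/
theorem nondegenerate_class_characterized_by_worst_payoff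
    {O C : Type*} [Fintype O] [DecidableEq O] [DecidableEq C]
    (I : Finset O) (D : C → Finset O) (pay : O → ℤ) (F : Finset C)
    (hI : I.Nonempty)
    (hcov : ∀ o ∈ I, ∃ c ∈ F, o ∈ D c)
    (hdisj : ∀ c c' : C, c ≠ c' → Disjoint (D c) (D c'))
    (hpay : Function.Injective pay)
    (η η' : List C) (hv : ValidState F η) (hv' : ValidState F η')
    (h : (target I D pay η).Nonempty) (h' : (target I D pay η').Nonempty)
    (hmin : ((target I D pay η).image pay).min' (h.image pay)
          = ((target I D pay η').image pay).min' (h'.image pay)) :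
    target I D pay η = target I D pay η' :=
  nondegenerate_class_characterized_by_worst_payoff_general I D pay hdisj hpay η η' h h' hmin
end

section
/- At any step of the PPE construction, there exists a unique best Newcombian Class η* such that for every child n of the current node other than the pure part of η*, the state (n, η*) has empty target set (i.e., η* discards all outcomes targeted by the siblings of its pure part). -/
open Classical

/-! Let `om` be the outcome of `I` the current player likes best. Because the children partition
`I`, the siblings of a state `n₀ :: rest` all have empty target exactly when its target dominates
every outcome of `I` outside `n₀`. Then `om` cannot lie outside `n₀`, which pins down the head,
and the target is forced to be the set of outcomes of `n₀` beating everything outside `n₀`.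
A state with this property is obtained by descending from `om`. -/

section BestClass

variable {O C : Type*} [DecidableEq O] (I : Finset O) (D : C → Finset O) (pay : O → ℤ)

def IsDominated (T : Finset O) (o : O) : Prop :=
  T.Nonempty ∧ ∀ o' ∈ T, pay o < pay o'

def bestTarget (n : C) : Finset O :=
  (I ∩ D n).filter fun o => ∀ o' ∈ I, o' ∉ D n → pay o' < pay o

theorem mem_bestTarget {n : C} {o : O} :
    o ∈ bestTarget I D pay n ↔ o ∈ I ∧ o ∈ D n ∧ ∀ o' ∈ I, o' ∉ D n → pay o' < pay o := by
  simp [bestTarget, and_assoc]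

omit [DecidableEq O] in
theorem card_filter_lt_lt {s : Finset O} {a b : O} (hb : b ∈ s) (hab : pay b < pay a) :
    (s.filter (pay · < pay b)).card < (s.filter (pay · < pay a)).card := by
  refine Finset.card_lt_card ((Finset.ssubset_iff_of_subset ?_).2 ⟨b, ?_, ?_⟩)
  · intro x
    simp only [Finset.mem_filter]
    exact And.imp_right (·.trans hab)
  · simpa using ⟨hb, hab⟩
  · simp

theorem validState_singleton {F : Finset C} {n : C} (hn : n ∈ F) : ValidState F [n] :=
  ⟨List.cons_ne_nil n [], by simpa using hn, List.isChain_singleton n⟩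

theorem ValidState.cons {F : Finset C} {n m : C} {p : List C} (hn : n ∈ F) (hnm : n ≠ m)
    (h : ValidState F (m :: p)) : ValidState F (n :: m :: p) :=
  ⟨List.cons_ne_nil n _, by simpa [hn] using h.2.1, h.2.2.cons_cons hnm⟩

variable [Fintype O]

theorem target_singleton (n : C) : target I D pay [n] = I ∩ D n := rfl

theorem mem_target_cons_cons {o : O} {n m : C} {p : List C} :
    o ∈ target I D pay (n :: m :: p) ↔
      o ∈ I ∧ o ∈ D n ∧ ¬ IsDominated pay (target I D pay (m :: p)) o := by
  simp [target, IsDominated, and_assoc]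

theorem mem_of_mem_target {o : O} {n : C} {p : List C} (h : o ∈ target I D pay (n :: p)) :
    o ∈ I ∧ o ∈ D n := by
  cases p with
  | nil => simpa [target_singleton] using h
  | cons m q => exact ((mem_target_cons_cons I D pay).1 h).imp_right And.left

theorem target_cons_cons_eq_empty_iff {n m : C} {p : List C} :
    target I D pay (n :: m :: p) = ∅ ↔
      ∀ o ∈ I, o ∈ D n → IsDominated pay (target I D pay (m :: p)) o := by
  simp [Finset.eq_empty_iff_forall_notMem, mem_target_cons_cons]

theorem siblings_target_eq_empty_iff {F : Finset C} {n₀ : C} {rest : List C}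
    (hcov : ∀ o ∈ I, ∃ c ∈ F, o ∈ D c)
    (hdisj : ∀ c c' : C, c ≠ c' → Disjoint (D c) (D c')) :
    (∀ n ∈ F, n ≠ n₀ → target I D pay (n :: n₀ :: rest) = ∅) ↔
      ∀ o ∈ I, o ∉ D n₀ → IsDominated pay (target I D pay (n₀ :: rest)) o := by
  simp only [target_cons_cons_eq_empty_iff]
  constructor
  · intro h o ho hout
    obtain ⟨c, hcF, hoc⟩ := hcov o ho
    exact h c hcF (fun hc => hout (hc ▸ hoc)) o ho hoc
  · intro h n _ hne o ho hon
    exact h o ho (Finset.disjoint_left.1 (hdisj n n₀ hne) hon)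

theorem mem_of_forall_dominated {n : C} {rest : List C} {om : O} (homI : om ∈ I)
    (homax : ∀ o ∈ I, pay o ≤ pay om)
    (hdom : ∀ o ∈ I, o ∉ D n → IsDominated pay (target I D pay (n :: rest)) o) :
    om ∈ D n := by
  by_contra hout
  obtain ⟨⟨t, ht⟩, hlt⟩ := hdom om homI hout
  exact (hlt t ht).not_ge (homax t (mem_of_mem_target I D pay ht).1)

theorem target_eq_bestTarget {n : C} {rest : List C}
    (hdisj : ∀ c c' : C, c ≠ c' → Disjoint (D c) (D c'))
    (hchain : (n :: rest).IsChain (· ≠ ·))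
    (hdom : ∀ o ∈ I, o ∉ D n → IsDominated pay (target I D pay (n :: rest)) o) :
    target I D pay (n :: rest) = bestTarget I D pay n := by
  ext o
  rw [mem_bestTarget]
  constructor
  · intro ho
    obtain ⟨hoI, hoD⟩ := mem_of_mem_target I D pay ho
    exact ⟨hoI, hoD, fun o' ho' hout => (hdom o' ho' hout).2 o ho⟩
  · rintro ⟨hoI, hoD, hbest⟩
    cases rest with
    | nil => simpa [target_singleton] using ⟨hoI, hoD⟩
    | cons m p =>
      refine (mem_target_cons_cons I D pay).2 ⟨hoI, hoD, fun ⟨⟨t, ht⟩, hlt⟩ => ?_⟩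
      obtain ⟨htI, htD⟩ := mem_of_mem_target I D pay ht
      have htn : t ∉ D n := Finset.disjoint_right.1 (hdisj n m hchain.rel) htD
      exact (hlt t ht).not_gt (hbest t htI htn)

/-- The state is built greedily: head with the child `n` containing `o`, and if some outcome
outside `n` pays less than `o`, follow with the state built for the best such outcome `b`. -/
theorem exists_validState_dominating_below (F : Finset C)
    (hcov : ∀ o ∈ I, ∃ c ∈ F, o ∈ D c)
    (hdisj : ∀ c c' : C, c ≠ c' → Disjoint (D c) (D c'))
    (hpay : Function.Injective pay) (o : O) (ho : o ∈ I) :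
    ∃ n rest, ValidState F (n :: rest) ∧ o ∈ target I D pay (n :: rest) ∧
      ∀ o' ∈ I, o' ∉ D n → pay o' < pay o → IsDominated pay (target I D pay (n :: rest)) o' := by
  obtain ⟨n, hnF, hon⟩ := hcov o ho
  set S := I.filter fun x => x ∉ D n ∧ pay x < pay o
  by_cases hS : S.Nonempty
  swap
  · refine ⟨n, [], validState_singleton hnF, by simpa [target_singleton] using ⟨ho, hon⟩, ?_⟩
    exact fun o' ho' hout hlt => absurd ⟨o', by simpa [S] using ⟨ho', hout, hlt⟩⟩ hS
  obtain ⟨b, hbS, hbmax⟩ := S.exists_max_image pay hS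
  obtain ⟨hbI, hbn, hbo⟩ : b ∈ I ∧ b ∉ D n ∧ pay b < pay o := by simpa [S] using hbS
  have := card_filter_lt_lt pay hbI hbo -- the termination measure decreases
  obtain ⟨m, p, hval, hbT, hdom⟩ :=
    exists_validState_dominating_below F hcov hdisj hpay b hbI
  have hnm : n ≠ m := fun h => hbn (h ▸ (mem_of_mem_target I D pay hbT).2)
  have hoT : o ∈ target I D pay (n :: m :: p) :=
    (mem_target_cons_cons I D pay).2 ⟨ho, hon, fun h => (h.2 b hbT).not_gt hbo⟩
  refine ⟨n, m :: p, hval.cons hnF hnm, hoT, fun o' ho' hout hlt => ⟨⟨o, hoT⟩, fun t ht => ?_⟩⟩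
  obtain ⟨htI, htn, htnd⟩ := (mem_target_cons_cons I D pay).1 ht
  have hob : pay o' ≤ pay b := hbmax o' (by simpa [S] using ⟨ho', hout, hlt⟩)
  suffices pay b < pay t by omega
  by_contra! htb
  have htm : t ∉ D m := Finset.disjoint_left.1 (hdisj n m hnm) htn
  have hne : t ≠ b := fun h => hbn (h ▸ htn)
  exact htnd (hdom t htI htm (htb.lt_of_ne (hpay.ne hne)))
termination_by (I.filter (pay · < pay o)).card

end BestClass

theorem best_newcombian_class_exists_unique_general
    {O C : Type*} [Fintype O] [DecidableEq O]
    (I : Finset O) (D : C → Finset O) (pay : O → ℤ) (F : Finset C)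
    (hI : I.Nonempty)
    (hcov : ∀ o ∈ I, ∃ c ∈ F, o ∈ D c)
    (hdisj : ∀ c c' : C, c ≠ c' → Disjoint (D c) (D c'))
    (hpay : Function.Injective pay) :
    ∃ (n₀ : C) (rest : List C), ValidState F (n₀ :: rest) ∧
      (∀ n ∈ F, n ≠ n₀ → target I D pay (n :: n₀ :: rest) = ∅) ∧
      ∀ (n₀' : C) (rest' : List C), ValidState F (n₀' :: rest') →
        (∀ n ∈ F, n ≠ n₀' → target I D pay (n :: n₀' :: rest') = ∅) →
        target I D pay (n₀' :: rest') = target I D pay (n₀ :: rest) := by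
  obtain ⟨om, homI, homax⟩ := I.exists_max_image pay hI
  obtain ⟨n₀, rest, hval, homT, hdom⟩ :=
    exists_validState_dominating_below I D pay F hcov hdisj hpay om homI
  have homn₀ : om ∈ D n₀ := (mem_of_mem_target I D pay homT).2
  have hdom₀ : ∀ o ∈ I, o ∉ D n₀ → IsDominated pay (target I D pay (n₀ :: rest)) o :=
    fun o ho hout => hdom o ho hout <|
      (homax o ho).lt_of_ne (hpay.ne fun h => hout (h ▸ homn₀))
  refine ⟨n₀, rest, hval, (siblings_target_eq_empty_iff I D pay hcov hdisj).2 hdom₀,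
    fun n₀' rest' hval' hsib' => ?_⟩
  have hdom' := (siblings_target_eq_empty_iff I D pay hcov hdisj).1 hsib'
  obtain rfl : n₀' = n₀ := by
    by_contra hne
    exact Finset.disjoint_left.1 (hdisj n₀' n₀ hne)
      (mem_of_forall_dominated I D pay homI homax hdom') homn₀
  rw [target_eq_bestTarget I D pay hdisj hval'.2.2 hdom',
    target_eq_bestTarget I D pay hdisj hval.2.2 hdom₀]

/-- existence and uniqueness (as a Newcombian Class, i.e. up to
target-equivalence) of the best Newcombian Class η*: for every child `n` other
than the pure part of η*, the state `(n, η*)` has empty target set. -/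
theorem best_newcombian_class_exists_unique
    {O C : Type*} [Fintype O] [DecidableEq O] [DecidableEq C]
    (I : Finset O) (D : C → Finset O) (pay : O → ℤ) (F : Finset C)
    (hI : I.Nonempty)
    (hcov : ∀ o ∈ I, ∃ c ∈ F, o ∈ D c)
    (hdisj : ∀ c c' : C, c ≠ c' → Disjoint (D c) (D c'))
    (hpay : Function.Injective pay) :
    ∃ (n₀ : C) (rest : List C), ValidState F (n₀ :: rest) ∧
      (∀ n ∈ F, n ≠ n₀ → target I D pay (n :: n₀ :: rest) = ∅) ∧
      ∀ (n₀' : C) (rest' : List C), ValidState F (n₀' :: rest') →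
        (∀ n ∈ F, n ≠ n₀' → target I D pay (n :: n₀' :: rest') = ∅) →
        target I D pay (n₀' :: rest') = target I D pay (n₀ :: rest) :=
  best_newcombian_class_exists_unique_general I D pay F hI hcov hdisj hpay
end
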